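/- arXiv:2308.16038 — 2 statements merged into one kernel-verified Lean document; each statement's English description precedes it below -/
import Mathlib

section
/- Let f, g : {0,1}^n → ℝ with f ≥ 0 pointwise, and let τ > ρ be reals such that (g ∗ f)(x) ≥ τ f(x) for all x, and ĝ(S) ≤ ρ whenever |S| ≥ d. Then Λ := g ∗ f ∗ f − ρ·(f ∗ f) satisfies Λ ≥ 0 pointwise and Λ̂(S) ≤ 0 for all |S| ≥ d. -/
open Finset

namespace Cube

attribute [local instance] Classical.propDecidable

/-- Hamming weight of a point of the Boolean cube. -/
def wt {n : ℕ} (x : Fin n → Bool) : ℕ := (univ.filter fun i => x i = true).card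

/-- Hamming distance. -/
def hdist {n : ℕ} (x y : Fin n → Bool) : ℕ := (univ.filter fun i => x i ≠ y i).card

/-- Coordinatewise addition mod 2 (XOR). -/
def xadd {n : ℕ} (x y : Fin n → Bool) : Fin n → Bool := fun i => x i != y i

/-- Walsh character `W_S(x) = (-1)^{⟨S,x⟩}`. -/
noncomputable def W {n : ℕ} (S x : Fin n → Bool) : ℝ :=
  (-1 : ℝ) ^ (univ.filter fun i => S i = true ∧ x i = true).card

/-- Fourier transform `f̂(S) = 2^{-n} ∑_x f(x) W_S(x)`. -/
noncomputable def ft {n : ℕ} (f : (Fin n → Bool) → ℝ) : (Fin n → Bool) → ℝ :=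
  fun S => (∑ x, f x * W S x) / 2 ^ n

/-- Convolution `(f ∗ g)(x) = 2^{-n} ∑_y f(y) g(x+y)`. -/
noncomputable def conv {n : ℕ} (f g : (Fin n → Bool) → ℝ) : (Fin n → Bool) → ℝ :=
  fun x => (∑ y, f y * g (xadd x y)) / 2 ^ n

/-- Normalized inner product `⟨f,g⟩ = 2^{-n} ∑_x f(x) g(x)`. -/
noncomputable def inp {n : ℕ} (f g : (Fin n → Bool) → ℝ) : ℝ := (∑ x, f x * g x) / 2 ^ n

/-- The all-zeros vector. -/
def zeroV (n : ℕ) : Fin n → Bool := fun _ => false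

/-- Krawtchouk polynomial value `K_s(j)` (parameter `n`), at integer points. -/
noncomputable def kraw (n s j : ℕ) : ℝ :=
  ∑ k ∈ Finset.range (s + 1),
    (-1 : ℝ) ^ k * (j.choose k : ℝ) * ((n - j).choose (s - k) : ℝ)

/-- Generalized binomial coefficient `C(x,k)` for real `x`. -/
noncomputable def rchoose (x : ℝ) (k : ℕ) : ℝ :=
  (∏ i ∈ Finset.range k, (x - i)) / (k.factorial : ℝ)

/-- Krawtchouk polynomial `K_m` (parameter `n`) as a function of a real variable. -/
noncomputable def krawR (n m : ℕ) (x : ℝ) : ℝ :=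
  ∑ k ∈ Finset.range (m + 1),
    (-1 : ℝ) ^ k * rchoose x k * rchoose ((n : ℝ) - x) (m - k)

/-- Symmetrization operator: average over the Hamming sphere of the same weight. -/
noncomputable def symm {n : ℕ} (f : (Fin n → Bool) → ℝ) : (Fin n → Bool) → ℝ :=
  fun x => (∑ y ∈ univ.filter (fun y => wt y = wt x), f y) /
    ((univ.filter (fun y : Fin n → Bool => wt y = wt x)).card : ℝ)

/-- Binary entropy function. -/
noncomputable def binH (x : ℝ) : ℝ :=
  x * Real.logb 2 (1 / x) + (1 - x) * Real.logb 2 (1 / (1 - x))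

/-! Pointwise, `g ∗ f ≥ τ f` and `f ≥ 0` give `g ∗ f ∗ f ≥ τ (f ∗ f) ≥ ρ (f ∗ f)`, since `f ∗ f ≥ 0`
and `ρ < τ`. On the Fourier side the convolution theorem gives `Λ̂ = (ĝ - ρ) f̂²`, which is
nonpositive wherever `ĝ ≤ ρ`. -/

section

variable {n : ℕ}

lemma xadd_xadd_cancel_right (x y : Fin n → Bool) : xadd (xadd x y) y = x := by
  funext i
  simp only [xadd]
  cases x i <;> cases y i <;> rfl

lemma sum_comp_xadd_right {M : Type*} [AddCommMonoid M] (y : Fin n → Bool)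
    (F : (Fin n → Bool) → M) : ∑ x, F (xadd x y) = ∑ x, F x :=
  Equiv.sum_comp (Function.Involutive.toPerm _ fun x => xadd_xadd_cancel_right x y) F

lemma W_eq_prod (S x : Fin n → Bool) :
    W S x = ∏ i, if S i = true ∧ x i = true then -1 else 1 := by
  rw [W, ← prod_const, prod_filter]

lemma W_xadd (S x y : Fin n → Bool) : W S (xadd x y) = W S x * W S y := by
  simp only [W_eq_prod, ← prod_mul_distrib]
  refine prod_congr rfl fun i _ => ?_
  simp only [xadd]
  rcases Bool.eq_false_or_eq_true (S i) with hS | hS <;>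
    rcases Bool.eq_false_or_eq_true (x i) with hx | hx <;>
    rcases Bool.eq_false_or_eq_true (y i) with hy | hy <;> simp [hS, hx, hy]

lemma ft_conv (f g : (Fin n → Bool) → ℝ) (S : Fin n → Bool) :
    ft (conv f g) S = ft f S * ft g S := by
  have key : ∑ x, (∑ y, f y * g (xadd x y)) * W S x
      = (∑ y, f y * W S y) * ∑ z, g z * W S z := by
    simp only [sum_mul]
    rw [sum_comm]
    refine sum_congr rfl fun y _ => ?_
    rw [mul_sum]
    conv_lhs => rw [← sum_comp_xadd_right y]
    refine sum_congr rfl fun z _ => ?_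
    rw [xadd_xadd_cancel_right, W_xadd]
    ring
  simp only [ft, conv, div_mul_eq_mul_div, ← sum_div, key]
  ring

lemma ft_sub_const_mul (f g : (Fin n → Bool) → ℝ) (c : ℝ) (S : Fin n → Bool) :
    ft (fun x => f x - c * g x) S = ft f S - c * ft g S := by
  simp only [ft, sub_mul, mul_assoc, sum_sub_distrib, ← mul_sum, sub_div,
    mul_div_assoc]

lemma conv_nonneg {f g : (Fin n → Bool) → ℝ} (hf : ∀ x, 0 ≤ f x) (hg : ∀ x, 0 ≤ g x)
    (x : Fin n → Bool) : 0 ≤ conv f g x :=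
  div_nonneg (sum_nonneg fun y _ => mul_nonneg (hf y) (hg _)) (by positivity)

lemma conv_le_conv_left {f f' g : (Fin n → Bool) → ℝ} (hf : ∀ x, f x ≤ f' x)
    (hg : ∀ x, 0 ≤ g x) (x : Fin n → Bool) : conv f g x ≤ conv f' g x := by
  unfold conv
  gcongr with y
  · exact hg _
  · exact hf y

lemma conv_const_mul_left (c : ℝ) (f g : (Fin n → Bool) → ℝ) (x : Fin n → Bool) :
    conv (fun y => c * f y) g x = c * conv f g x := by
  simp only [conv, mul_assoc, ← mul_sum, mul_div_assoc]

end

theorem two_function_feasible (n d : ℕ) (f g : (Fin n → Bool) → ℝ) (τ ρ : ℝ)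
    (hf : ∀ x, 0 ≤ f x) (hτρ : ρ < τ)
    (h1 : ∀ x, τ * f x ≤ conv g f x)
    (h2 : ∀ S : Fin n → Bool, d ≤ wt S → ft g S ≤ ρ) :
    (∀ x, 0 ≤ conv (conv g f) f x - ρ * conv f f x) ∧
    (∀ S : Fin n → Bool, d ≤ wt S →
      ft (fun x => conv (conv g f) f x - ρ * conv f f x) S ≤ 0) := by
  refine ⟨fun x => ?_, fun S hS => ?_⟩
  · have hτ : τ * conv f f x ≤ conv (conv g f) f x := by
      rw [← conv_const_mul_left]
      exact conv_le_conv_left h1 hf x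
    have hρ : ρ * conv f f x ≤ τ * conv f f x :=
      mul_le_mul_of_nonneg_right hτρ.le (conv_nonneg hf hf x)
    linarith
  · calc ft (fun x => conv (conv g f) f x - ρ * conv f f x) S
        = (ft g S - ρ) * ft f S ^ 2 := by
          rw [ft_sub_const_mul, ft_conv, ft_conv, ft_conv]
          ring
      _ ≤ 0 := mul_nonpos_of_nonpos_of_nonneg (sub_nonpos.2 (h2 S hS)) (sq_nonneg _)

end Cube
end

section
/- Let d < βn and let K_m be a Krawtchouk polynomial whose smallest root x₁ satisfies x₁ − 1 > βn. Then K_m(d) > 0 and K_m(d)/K_m(0) ≥ ((x₁ − d)/x₁)^m ≥ (2β − 2δ)^m, where δ = d/n. -/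
/-!
On the Boolean cube `kraw n m |x| = ∑_{|A| = m} (-1)^{|A ∩ x|}`, and for `|T| < m` each of these
characters sums to zero over the supersets `x` of `T`. Hence `K_m(|x|)` is orthogonal,
over the cube, to every polynomial in `|x|` of degree `< m`, which as for classical orthogonal
polynomials forces all its roots to be real: otherwise multiplying `K_m` by `∏ (X - z)` over its
fewer than `m` roots `z` of odd multiplicity gives a polynomial of constant sign, nonzero at
`|∅| = 0` since `K_m(0) = C(n, m) ≠ 0`, whose sum over the cube vanishes. With all roots real
and `≥ x₁ > d`, `K_m(d) / K_m(0) = ∏_z (1 - d / z) ≥ (1 - d / x₁)^m`; the last bound is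
arithmetic from `d = δn < βn < x₁`.
-/

open Finset

namespace Cube

attribute [local instance] Classical.propDecidable

section CubeSums

variable {α : Type*} [Fintype α] [DecidableEq α]

theorem sum_superset_neg_one_pow_card_inter_eq_zero {A T : Finset α} (h : ¬A ⊆ T) :
    ∑ x with T ⊆ x, (-1 : ℝ) ^ #(A ∩ x) = 0 := by
  obtain ⟨i, hiA, hiT⟩ := not_subset.1 h
  -- The sum is the expansion of `∏ j, ((if j ∈ A then -1 else 1) + if j ∉ T then 1 else 0)`,
  -- whose factor at `i` is `-1 + 1 = 0`.
  have key (x : Finset α) : ((∏ j ∈ x, if j ∈ A then (-1 : ℝ) else 1) *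
      ∏ j ∈ univ \ x, if j ∉ T then (1 : ℝ) else 0) =
      if T ⊆ x then (-1 : ℝ) ^ #(A ∩ x) else 0 := by
    have hT : (∀ j ∈ univ \ x, j ∉ T) ↔ T ⊆ x := by
      simp only [mem_sdiff, mem_univ, true_and, subset_iff]
      exact forall_congr' fun j => not_imp_not
    rw [prod_ite_mem, prod_const, prod_boole, inter_comm, mul_ite, mul_one, mul_zero]
    simp only [hT]
  rw [sum_filter, ← sum_congr rfl fun x _ => key x, ← powerset_univ, ← prod_add]
  exact prod_eq_zero (mem_univ i) (by simp [hiA, hiT])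

theorem card_filter_powersetCard_card_inter {m k : ℕ} (hk : k ≤ m) (x : Finset α) :
    #{A ∈ powersetCard m univ | #(A ∩ x) = k} = (#x).choose k * (#xᶜ).choose (m - k) := by
  rw [← card_powersetCard, ← card_powersetCard, ← card_product]
  have split {B C : Finset α} (hB : B ⊆ x) (hC : C ⊆ xᶜ) :
      (B ∪ C) ∩ x = B ∧ (B ∪ C) \ x = C ∧ Disjoint B C := by
    have hxC : Disjoint x C := subset_compl_iff_disjoint_left.1 hC
    refine ⟨?_, ?_, disjoint_of_subset_left hB hxC⟩
    · rw [union_inter_distrib_right, inter_eq_left.2 hB, inter_comm,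
        disjoint_iff_inter_eq_empty.1 hxC, union_empty]
    · rw [union_sdiff_distrib, sdiff_eq_empty_iff_subset.2 hB, empty_union,
        sdiff_eq_self_of_disjoint hxC.symm]
  refine card_nbij' (fun A => (A ∩ x, A \ x)) (fun p => p.1 ∪ p.2) ?_ ?_ ?_ ?_ <;>
    simp only [Set.MapsTo, Set.LeftInvOn, coe_filter, coe_product, Set.mem_prod, mem_coe,
      mem_powersetCard, subset_univ, true_and, Set.mem_ofPred_eq, Prod.forall, and_imp]
  · intro A hA hk
    have := card_sdiff_add_card_inter A x
    exact ⟨⟨inter_subset_right, hk⟩, sdiff_eq_inter_compl A x ▸ inter_subset_right,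
      by omega⟩
  · intro B C hB hBk hC hCk
    obtain ⟨hBx, -, hBC⟩ := split hB hC
    rw [card_union_of_disjoint hBC, hBx]
    omega
  · intro A _ _
    exact sup_inf_sdiff A x
  · intro B C hB _ hC _
    obtain ⟨hBx, hCx, -⟩ := split hB hC
    rw [hBx, hCx]

theorem sum_powersetCard_neg_one_pow_card_inter_eq_kraw (m : ℕ) (x : Finset α) :
    ∑ A ∈ powersetCard m univ, (-1 : ℝ) ^ #(A ∩ x) = kraw (Fintype.card α) m #x := by
  have hmaps : ∀ A ∈ powersetCard m (univ : Finset α), #(A ∩ x) ∈ range (m + 1) :=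
    fun A hA => mem_range_succ_iff.2
      ((card_le_card inter_subset_left).trans (mem_powersetCard.1 hA).2.le)
  rw [← sum_fiberwise_of_maps_to hmaps, kraw]
  refine sum_congr rfl fun k hk => ?_
  rw [sum_congr rfl fun A hA => by rw [(mem_filter.1 hA).2], sum_const, nsmul_eq_mul,
    card_filter_powersetCard_card_inter (mem_range_succ_iff.1 hk), card_compl]
  push_cast
  ring

theorem sum_superset_kraw_card_eq_zero {m : ℕ} {T : Finset α} (hT : #T < m) :
    ∑ x with T ⊆ x, kraw (Fintype.card α) m #x = 0 := by
  simp_rw [← sum_powersetCard_neg_one_pow_card_inter_eq_kraw]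
  rw [sum_comm]
  refine sum_eq_zero fun A hA => sum_superset_neg_one_pow_card_inter_eq_zero fun hAT => ?_
  have := card_le_card hAT
  rw [(mem_powersetCard.1 hA).2] at this
  omega

theorem card_pow_eq_sum_boole_image_subset (x : Finset α) (t : ℕ) :
    (#x : ℝ) ^ t = ∑ f : Fin t → α, if univ.image f ⊆ x then 1 else 0 := by
  rw [sum_boole, ← Nat.cast_pow, ← Fintype.card_piFinset_const]
  congr 2
  ext f
  simp [image_subset_iff]

theorem sum_card_pow_mul_kraw_card_eq_zero {m t : ℕ} (ht : t < m) :
    ∑ x : Finset α, (#x : ℝ) ^ t * kraw (Fintype.card α) m #x = 0 := by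
  simp_rw [card_pow_eq_sum_boole_image_subset, sum_mul, ite_mul, one_mul, zero_mul]
  rw [sum_comm]
  refine sum_eq_zero fun f _ => ?_
  rw [← sum_filter]
  apply sum_superset_kraw_card_eq_zero
  calc #(univ.image f) ≤ t := card_image_le.trans (card_fin t).le
    _ < m := ht

theorem sum_eval_card_mul_kraw_card_eq_zero {m : ℕ} {Q : Polynomial ℝ} (hQ : Q.natDegree < m) :
    ∑ x : Finset α, Q.eval (#x : ℝ) * kraw (Fintype.card α) m #x = 0 := by
  simp_rw [Polynomial.eval_eq_sum_range, sum_mul, mul_assoc]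
  rw [sum_comm]
  refine sum_eq_zero fun i hi => ?_
  rw [← mul_sum, sum_card_pow_mul_kraw_card_eq_zero (by rw [mem_range] at hi; omega), mul_zero]

end CubeSums

section Roots

open Polynomial

theorem eval_mul_eval_pos_of_forall_not_isRoot {U : ℝ[X]} (hU : ∀ z, ¬U.IsRoot z) (x y : ℝ) :
    0 < U.eval x * U.eval y := by
  by_contra! h
  have h0 : (0 : ℝ) ∈ Set.uIcc (U.eval x) (U.eval y) := by
    rcases lt_or_gt_of_ne (hU x : U.eval x ≠ 0) with hx | hx
    · exact Set.mem_uIcc_of_le hx.le (by nlinarith)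
    · exact Set.mem_uIcc_of_ge (by nlinarith) hx.le
  obtain ⟨c, -, hc⟩ := intermediate_value_uIcc U.continuous.continuousOn h0
  exact hU c hc

theorem eval_mul_eval_nonneg_of_even_rootMultiplicity {f : ℝ[X]}
    (hf : ∀ z, Even (f.rootMultiplicity z)) (x y : ℝ) : 0 ≤ f.eval x * f.eval y := by
  obtain ⟨U, hfU, -, hU⟩ := exists_prod_multiset_X_sub_C_mul f
  have hR (w : ℝ) : 0 ≤ (f.roots.map fun a => X - C a).prod.eval w := by
    rw [prod_multiset_root_eq_finset_root, eval_prod]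
    exact prod_nonneg fun z _ => by rw [eval_pow]; exact (hf z).pow_nonneg _
  rcases eq_or_ne U 0 with rfl | hU0
  · rw [mul_zero] at hfU
    simp [← hfU]
  have hUxy := eval_mul_eval_pos_of_forall_not_isRoot
    (fun z hz => by simpa [hU] using (mem_roots hU0).2 hz) x y
  rw [← hfU, eval_mul, eval_mul, mul_mul_mul_comm]
  exact mul_nonneg (mul_nonneg (hR x) (hR y)) hUxy.le

noncomputable def oddMultiplicityRoots (P : ℝ[X]) : Finset ℝ :=
  P.roots.toFinset.filter fun z => Odd (P.rootMultiplicity z)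

theorem even_rootMultiplicity_prod_oddMultiplicityRoots_mul {P : ℝ[X]} (hP : P ≠ 0) (z : ℝ) :
    Even (((∏ a ∈ oddMultiplicityRoots P, (X - C a)) * P).rootMultiplicity z) := by
  rw [rootMultiplicity_mul (mul_ne_zero (prod_ne_zero_iff.2 fun a _ => X_sub_C_ne_zero a) hP),
    ← count_roots, roots_prod_X_sub_C, Multiset.count_eq_of_nodup (oddMultiplicityRoots P).nodup]
  by_cases hz : z ∈ oddMultiplicityRoots P
  · rw [if_pos (mem_def.1 hz), add_comm]
    exact (mem_filter.1 hz).2.add_one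
  · rw [if_neg (mt mem_def.2 hz), zero_add]
    refine Nat.not_odd_iff_even.1 fun hodd => hz (mem_filter.2 ⟨?_, hodd⟩)
    exact Multiset.mem_toFinset.2 ((mem_roots hP).2 ((rootMultiplicity_pos hP).1 hodd.pos))

theorem card_roots_eq_natDegree_of_orthogonal {ι : Type*} [Fintype ι] {P : ℝ[X]}
    (t : ι → ℝ)
    (horth : ∀ Q : ℝ[X], Q.natDegree < P.natDegree → ∑ i, Q.eval (t i) * P.eval (t i) = 0)
    {i₀ : ι} (hi₀ : P.eval (t i₀) ≠ 0) : Multiset.card P.roots = P.natDegree := by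
  have hP : P ≠ 0 := by rintro rfl; simp at hi₀
  set E := oddMultiplicityRoots P
  suffices P.natDegree ≤ #E from le_antisymm (card_roots' P)
    (this.trans ((card_filter_le _ _).trans (Multiset.toFinset_card_le _)))
  by_contra! hE
  set Q := ∏ z ∈ E, (X - C z)
  have hQ : Q.eval (t i₀) ≠ 0 := by
    rw [eval_prod]
    refine prod_ne_zero_iff.2 fun z hz h => hi₀ ?_
    have hroot : P.IsRoot z := (mem_roots hP).1 (Multiset.mem_toFinset.1 (mem_filter.1 hz).1)
    rw [eval_sub, eval_X, eval_C, sub_eq_zero] at h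
    rwa [h]
  have hsign := eval_mul_eval_nonneg_of_even_rootMultiplicity
    (even_rootMultiplicity_prod_oddMultiplicityRoots_mul hP)
  have hpos : 0 < ∑ i, (Q * P).eval (t i) * (Q * P).eval (t i₀) :=
    sum_pos' (fun i _ => hsign _ _) ⟨i₀, mem_univ _, mul_self_pos.2 (by simp [hQ, hi₀])⟩
  simp_rw [← sum_mul, eval_mul, horth Q (by rwa [natDegree_finsetProd_X_sub_C_eq_card]),
    zero_mul] at hpos
  exact hpos.false

theorem eval_div_eval_eq_prod_roots {K : Type*} [Field K] {P : K[X]}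
    (hP : Multiset.card P.roots = P.natDegree) {x : K} (hx : P.eval x ≠ 0) (y : K) :
    P.eval y / P.eval x = (P.roots.map fun z => (y - z) / (x - z)).prod := by
  have hlc : P.leadingCoeff ≠ 0 := leadingCoeff_ne_zero.2 (by rintro rfl; simp at hx)
  have heval (w : K) : P.eval w = P.leadingCoeff * (P.roots.map fun z => w - z).prod := by
    conv_lhs => rw [← C_leadingCoeff_mul_prod_multiset_X_sub_C hP]
    simp only [eval_mul, eval_C, eval_multiset_prod, Multiset.map_map, Function.comp_def,
      eval_sub, eval_X]
  rw [heval, heval, mul_div_mul_left _ _ hlc, Multiset.prod_map_div]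

theorem pow_card_le_prod_map_of_nonneg {R ι : Type*} [CommMonoidWithZero R] [PartialOrder R]
    [ZeroLEOneClass R] [PosMulMono R] {s : Multiset ι} {f : ι → R} {a : R} (ha : 0 ≤ a)
    (h : ∀ i ∈ s, a ≤ f i) : a ^ Multiset.card s ≤ (s.map f).prod := by
  simpa using Multiset.prod_map_le_prod_map₀ (fun _ => a) f (fun _ _ => ha) h

end Roots

section KrawtchoukPolynomial

open Polynomial
open scoped Nat

theorem rchoose_eq_eval_descPochhammer (x : ℝ) (k : ℕ) :
    rchoose x k = (descPochhammer ℝ k).eval x / k ! := by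
  rw [rchoose, descPochhammer_eval_eq_prod_range]

theorem rchoose_natCast (j k : ℕ) : rchoose j k = j.choose k := by
  rw [rchoose_eq_eval_descPochhammer, descPochhammer_eval_eq_descFactorial,
    Nat.descFactorial_eq_factorial_mul_choose, Nat.cast_mul, mul_div_cancel_left₀]
  positivity

theorem krawR_natCast {n j : ℕ} (m : ℕ) (hj : j ≤ n) : krawR n m j = kraw n m j := by
  simp only [krawR, kraw, ← Nat.cast_sub hj, rchoose_natCast]

theorem krawR_zero (n m : ℕ) : krawR n m 0 = n.choose m := by
  rw [← Nat.cast_zero, krawR_natCast m n.zero_le, kraw, sum_eq_single 0]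
  · simp
  · intro k _ hk
    simp [Nat.choose_eq_zero_of_lt (Nat.pos_of_ne_zero hk)]
  · simp

theorem krawR_zero_pos {n m : ℕ} (hm : m ≤ n) : 0 < krawR n m 0 := by
  rw [krawR_zero]
  exact_mod_cast Nat.choose_pos hm

noncomputable def krawPoly (n m : ℕ) : ℝ[X] :=
  ∑ k ∈ range (m + 1), C ((-1 : ℝ) ^ k / (k ! * (m - k)!)) *
    (descPochhammer ℝ k * (descPochhammer ℝ (m - k)).comp (C (n : ℝ) - X))

theorem eval_krawPoly (n m : ℕ) (x : ℝ) : (krawPoly n m).eval x = krawR n m x := by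
  simp only [krawPoly, krawR, eval_finsetSum, eval_mul, eval_C, eval_comp, eval_sub, eval_X,
    rchoose_eq_eval_descPochhammer]
  refine sum_congr rfl fun k _ => ?_
  field_simp

theorem natDegree_krawPoly_le (n m : ℕ) : (krawPoly n m).natDegree ≤ m := by
  refine natDegree_sum_le_of_forall_le _ _ fun k hk => (natDegree_C_mul_le _ _).trans ?_
  have hlin : (C (n : ℝ) - X).natDegree ≤ 1 := by
    simpa using natDegree_sub_le (C (n : ℝ)) X
  calc _ ≤ k + (m - k) * 1 := natDegree_mul_le.trans (add_le_add
        (descPochhammer_natDegree ℝ k).le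
        (natDegree_comp_le.trans (Nat.mul_le_mul (descPochhammer_natDegree ℝ _).le hlin)))
    _ = m := by rw [mem_range] at hk; omega

theorem card_roots_krawPoly {n m : ℕ} (hm : m ≤ n) :
    Multiset.card (krawPoly n m).roots = (krawPoly n m).natDegree := by
  refine card_roots_eq_natDegree_of_orthogonal (fun x : Finset (Fin n) => (#x : ℝ))
    (fun Q hQ => ?_) (i₀ := ∅) ?_
  · have hcard (x : Finset (Fin n)) : #x ≤ n := card_le_univ x |>.trans (Fintype.card_fin n).le
    simp_rw [eval_krawPoly, krawR_natCast m (hcard _)]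
    simpa using sum_eval_card_mul_kraw_card_eq_zero (α := Fin n)
      (hQ.trans_le (natDegree_krawPoly_le n m))
  · rw [card_empty, Nat.cast_zero, eval_krawPoly]
    exact (krawR_zero_pos hm).ne'

theorem pow_le_krawR_div_krawR_zero {n m : ℕ} (hm : m ≤ n) {x₁ y : ℝ} (hy : 0 ≤ y)
    (hyx : y < x₁) (hmin : ∀ z : ℝ, krawR n m z = 0 → x₁ ≤ z) :
    ((x₁ - y) / x₁) ^ m ≤ krawR n m y / krawR n m 0 := by
  set P := krawPoly n m
  have hx₁ : 0 < x₁ := hy.trans_lt hyx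
  have hc : 0 < (x₁ - y) / x₁ := div_pos (by linarith) hx₁
  have hK0 : P.eval 0 ≠ 0 := by
    rw [eval_krawPoly]
    exact (krawR_zero_pos hm).ne'
  have hfactor : ∀ z ∈ P.roots, (x₁ - y) / x₁ ≤ (y - z) / (0 - z) := by
    intro z hz
    have hx₁z : x₁ ≤ z := hmin z (by rw [← eval_krawPoly]; exact isRoot_of_mem_roots hz)
    rw [zero_sub, div_neg, ← neg_div, neg_sub, div_le_div_iff₀ hx₁ (by linarith)]
    nlinarith
  calc ((x₁ - y) / x₁) ^ m ≤ ((x₁ - y) / x₁) ^ Multiset.card P.roots := by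
        rw [card_roots_krawPoly hm]
        exact pow_le_pow_of_le_one hc.le (div_le_one_of_le₀ (by linarith) hx₁.le)
          (natDegree_krawPoly_le n m)
    _ ≤ (P.roots.map fun z => (y - z) / (0 - z)).prod :=
        pow_card_le_prod_map_of_nonneg hc.le hfactor
    _ = krawR n m y / krawR n m 0 := by
        rw [← eval_div_eval_eq_prod_roots (card_roots_krawPoly hm) hK0, eval_krawPoly,
          eval_krawPoly]

end KrawtchoukPolynomial

theorem kraw_value_at_d_below_first_root_general (n m d : ℕ) (β δ x₁ : ℝ)
    (hn : 0 < n) (hm : m ≤ n)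
    (hδ : δ = (d : ℝ) / n) (h0 : 0 < δ) (hβδ : δ < β) (hβ : β < 1 / 2)
    (hd : (d : ℝ) < β * n)
    (hmin : ∀ y : ℝ, krawR n m y = 0 → x₁ ≤ y)
    (hx₁ : β * n < x₁ - 1) :
    0 < krawR n m d ∧
    ((x₁ - d) / x₁) ^ m ≤ krawR n m d / krawR n m 0 ∧
    (2 * β - 2 * δ) ^ m ≤ ((x₁ - d) / x₁) ^ m := by
  have hd₀ : (0 : ℝ) ≤ d := d.cast_nonneg
  have hx₁₀ : 0 < x₁ := by linarith
  have hbound := pow_le_krawR_div_krawR_zero hm hd₀ (by linarith) hmin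
  refine ⟨?_, hbound, pow_le_pow_left₀ (by linarith) ?_ m⟩
  · exact (div_pos_iff_of_pos_right (krawR_zero_pos hm)).1
      ((pow_pos (div_pos (by linarith) hx₁₀) m).trans_le hbound)
  · have hdn : (d : ℝ) = δ * n := by rw [hδ, div_mul_cancel₀ _ (by positivity)]
    rw [le_div_iff₀ hx₁₀]
    nlinarith

theorem kraw_value_at_d_below_first_root (n m d : ℕ) (β δ x₁ : ℝ)
    (hn : 0 < n) (hm : m ≤ n)
    (hδ : δ = (d : ℝ) / n) (h0 : 0 < δ) (hβδ : δ < β) (hβ : β < 1 / 2)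
    (hd : (d : ℝ) < β * n)
    (hroot : krawR n m x₁ = 0)
    (hmin : ∀ y : ℝ, krawR n m y = 0 → x₁ ≤ y)
    (hx₁ : β * n < x₁ - 1) :
    0 < krawR n m d ∧
    ((x₁ - d) / x₁) ^ m ≤ krawR n m d / krawR n m 0 ∧
    (2 * β - 2 * δ) ^ m ≤ ((x₁ - d) / x₁) ^ m :=
  kraw_value_at_d_below_first_root_general n m d β δ x₁ hn hm hδ h0 hβδ hβ hd hmin hx₁

end Cube
end
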